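/- Let f be a threshold function on E_n^2 and let l : a_1x_1 + a_2x_2 = a_0 be an i-separation line of f (i.e., x ∈ M_i(f) iff a_1x_1 + a_2x_2 ≤ a_0). Then every vertex of Conv(l ∩ E_n^2) is an i-valued essential point of f with respect to the class of threshold functions on E_n^2. -/

import Mathlib

/-- The class of (1-)threshold functions on `{0,…,n-1}²`. -/
def ThresholdClass (n : ℕ) : Set ((Fin 2 → Fin n) → Bool) :=
  {f | ∃ b₁ b₂ b₀ : ℝ, ∀ x, f x = true ↔ b₁ * (x 0 : ℝ) + b₂ * (x 1 : ℝ) ≤ b₀}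

/-- `x` is an essential point of `f` with respect to the class `D`. -/
def Essential {α : Type*} (D : Set (α → Bool)) (f : α → Bool) (x : α) : Prop :=
  ∃ g ∈ D, g x ≠ f x ∧ ∀ y, y ≠ x → g y = f y

/-- The embedding of the grid into `ℝ²`. -/
def toR {n : ℕ} (x : Fin 2 → Fin n) : Fin 2 → ℝ := fun i => (x i : ℝ)

/-!
An extreme point `x` of the hull of the finite set `l ∩ E_n²` is strictly exposed in it
(Hahn–Banach): some linear form `ψ` attains its maximum on `l ∩ E_n²` only at `x`. Tilting `l`
to `a·y + ε (ψ y - ψ x) = a₀` with `ε > 0` small keeps every grid point off `l` on its side,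
moves the other points of `l` strictly inside and leaves `x` on the line. So the open tilted
half-plane, which on a finite set is also a closed one, cuts out `M_i(f)` minus `x`, and `f`
with the value at `x` flipped is again a threshold function.
-/

open Filter Topology Set

section LinearThreshold

variable {α E : Type*} [AddCommGroup E] [Module ℝ E]

def LinearThresholdClass (p : α → E) : Set (α → Bool) :=
  {g | ∃ (φ : E →ₗ[ℝ] ℝ) (b : ℝ), ∀ y, g y = true ↔ φ (p y) ≤ b}

theorem exists_forall_lt_iff_le [Finite α] (v : α → ℝ) (b : ℝ) :
    ∃ b', ∀ y, v y < b ↔ v y ≤ b' := by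
  have : ∀ᶠ b' in 𝓝[<] b, ∀ y, v y < b ↔ v y ≤ b' := by
    refine eventually_all.2 fun y => ?_
    rcases lt_or_ge (v y) b with h | h
    · filter_upwards [Ioo_mem_nhdsLT h] with b' hb' using iff_of_true h hb'.1.le
    · filter_upwards [self_mem_nhdsWithin] with b' (hb' : b' < b)
      exact iff_of_false h.not_gt (by linarith)
  exact this.exists

theorem mem_linearThresholdClass_of_true_iff_lt [Finite α] {p : α → E} {g : α → Bool}
    (φ : E →ₗ[ℝ] ℝ) (b : ℝ) (h : ∀ y, g y = true ↔ φ (p y) < b) :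
    g ∈ LinearThresholdClass p :=
  let ⟨b', hb'⟩ := exists_forall_lt_iff_le (fun y => φ (p y)) b
  ⟨φ, b', fun y => (h y).trans (hb' y)⟩

theorem mem_linearThresholdClass_of_false_iff_lt {p : α → E} {g : α → Bool}
    (φ : E →ₗ[ℝ] ℝ) (b : ℝ) (h : ∀ y, g y = false ↔ φ (p y) < b) :
    g ∈ LinearThresholdClass p :=
  ⟨-φ, -b, fun y => by rw [← Bool.not_eq_false, h y]; simp⟩

theorem exists_forall_add_mul_sub_lt_iff [Finite α] (u c : α → ℝ) {a : ℝ} {x : α}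
    (hx : u x = a) (hc : ∀ y, u y = a → y ≠ x → c y < c x) :
    ∃ ε : ℝ, ∀ y, u y + ε * (c y - c x) < a ↔ u y ≤ a ∧ y ≠ x := by
  have : ∀ᶠ ε in 𝓝[>] (0 : ℝ), ∀ y, u y + ε * (c y - c x) < a ↔ u y ≤ a ∧ y ≠ x := by
    refine eventually_all.2 fun y => ?_
    have ht : Tendsto (fun ε : ℝ => u y + ε * (c y - c x)) (𝓝[>] 0) (𝓝 (u y)) :=
      ((by fun_prop : Continuous fun ε : ℝ => u y + ε * (c y - c x)).tendsto' 0 _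
        (by simp)).mono_left nhdsWithin_le_nhds
    rcases lt_trichotomy (u y) a with h | rfl | h
    · filter_upwards [ht.eventually_lt_const h] with ε hε
      exact iff_of_true hε ⟨h.le, by rintro rfl; exact h.ne hx⟩
    · filter_upwards [self_mem_nhdsWithin] with ε (hε : 0 < ε)
      by_cases hyx : y = x
      · simp [hyx]
      · simpa [hyx] using mul_neg_of_pos_of_neg hε (sub_neg.2 (hc y rfl hyx))
    · filter_upwards [ht.eventually_const_lt h] with ε hε
      exact iff_of_false hε.not_gt fun h' => h.not_ge h'.1
  exact this.exists

theorem essential_linearThresholdClass [Finite α] {p : α → E} {f : α → Bool} {i : Bool}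
    {φ : E →ₗ[ℝ] ℝ} {a : ℝ} (hsep : ∀ y, f y = i ↔ φ (p y) ≤ a) {x : α} (hx : φ (p x) = a)
    (ψ : E →ₗ[ℝ] ℝ) (hψ : ∀ y, φ (p y) = a → y ≠ x → ψ (p y) < ψ (p x)) :
    Essential (LinearThresholdClass p) f x := by
  classical
  obtain ⟨ε, hε⟩ :=
    exists_forall_add_mul_sub_lt_iff (fun y => φ (p y)) (fun y => ψ (p y)) hx hψ
  have key : ∀ y, (φ + ε • ψ) (p y) < a + ε * ψ (p x) ↔ f y = i ∧ y ≠ x := fun y => by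
    rw [hsep, ← hε y]
    simp only [LinearMap.add_apply, LinearMap.smul_apply, smul_eq_mul]
    constructor <;> intro h <;> linarith
  have hfx : f x = i := (hsep x).2 hx.le
  refine ⟨Function.update f x (!i), ?_, by simp [hfx], fun y hy => Function.update_of_ne hy _ _⟩
  cases i
  · refine mem_linearThresholdClass_of_false_iff_lt (φ + ε • ψ) (a + ε * ψ (p x)) fun y => ?_
    rw [key]
    by_cases hy : y = x <;> simp [hy]
  · refine mem_linearThresholdClass_of_true_iff_lt (φ + ε • ψ) (a + ε * ψ (p x)) fun y => ?_
    rw [key]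
    by_cases hy : y = x <;> simp [hy]

end LinearThreshold

theorem Set.Finite.exists_strongDual_lt_of_mem_extremePoints_convexHull {E : Type*}
    [TopologicalSpace E] [AddCommGroup E] [Module ℝ E] [IsTopologicalAddGroup E]
    [ContinuousSMul ℝ E] [LocallyConvexSpace ℝ E] [T2Space E] {S : Set E} (hS : S.Finite)
    {x : E} (hx : x ∈ (convexHull ℝ S).extremePoints ℝ) :
    ∃ ψ : StrongDual ℝ E, ∀ y ∈ S, y ≠ x → ψ y < ψ x := by
  have hx' : x ∉ convexHull ℝ (S \ {x}) := fun h =>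
    ((convex_convexHull ℝ S).mem_extremePoints_iff_mem_sdiff_convexHull_sdiff.1 hx).2
      (convexHull_mono (sdiff_subset_sdiff_left (subset_convexHull ℝ S)) h)
  obtain ⟨ψ, u, hlt, hu⟩ := geometric_hahn_banach_closed_point (convex_convexHull ℝ _)
    (hS.sdiff.isClosed_convexHull ℝ) hx'
  exact ⟨ψ, fun y hy hyx => (hlt y (subset_convexHull ℝ _ ⟨hy, hyx⟩)).trans hu⟩

theorem toR_injective {n : ℕ} : Function.Injective (toR (n := n)) := fun _ _ h =>
  funext fun j => Fin.val_injective (Nat.cast_injective (congrFun h j))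

theorem linearThresholdClass_toR_subset (n : ℕ) :
    LinearThresholdClass (toR (n := n)) ⊆ ThresholdClass n := by
  rintro g ⟨φ, b, hg⟩
  refine ⟨φ (Pi.single 0 1), φ (Pi.single 1 1), b, fun y => (hg y).trans ?_⟩
  have hy : toR y = (y 0 : ℝ) • Pi.single 0 1 + (y 1 : ℝ) • Pi.single 1 1 := by
    ext j; fin_cases j <;> simp [toR]
  rw [hy, map_add, map_smul, map_smul, smul_eq_mul, smul_eq_mul, mul_comm, mul_comm (y 1 : ℝ)]

theorem stmt18_general (n : ℕ) (f : (Fin 2 → Fin n) → Bool) (i : Bool) (a₁ a₂ a₀ : ℝ)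
    (hsep : ∀ x, f x = i ↔ a₁ * (x 0 : ℝ) + a₂ * (x 1 : ℝ) ≤ a₀) :
    ∀ x : Fin 2 → Fin n,
      toR x ∈ Set.extremePoints ℝ
        (convexHull ℝ (toR '' {y : Fin 2 → Fin n |
          a₁ * (y 0 : ℝ) + a₂ * (y 1 : ℝ) = a₀})) →
      Essential (ThresholdClass n) f x ∧ f x = i := by
  intro x hx
  let φ : (Fin 2 → ℝ) →ₗ[ℝ] ℝ := a₁ • LinearMap.proj 0 + a₂ • LinearMap.proj 1
  have hφ : ∀ y : Fin 2 → Fin n, φ (toR y) = a₁ * (y 0 : ℝ) + a₂ * (y 1 : ℝ) :=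
    fun y => by simp [φ, toR]
  have hx_line : φ (toR x) = a₀ :=
    (hφ x).trans (toR_injective.mem_set_image.1 (extremePoints_convexHull_subset hx))
  obtain ⟨ψ, hψ⟩ :=
    Set.Finite.exists_strongDual_lt_of_mem_extremePoints_convexHull (Set.toFinite _) hx
  obtain ⟨g, hg, hgf⟩ := essential_linearThresholdClass (φ := φ) (fun y => (hφ y).symm ▸ hsep y)
    hx_line ψ fun y hy hyx => hψ _ ⟨y, (hφ y).symm.trans hy, rfl⟩ (toR_injective.ne hyx)
  exact ⟨⟨g, linearThresholdClass_toR_subset n hg, hgf⟩, (hsep x).2 ((hφ x).symm.trans hx_line).le⟩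

/-- If `l` is an `i`-separation line of a planar threshold function `f`, then
every vertex of `Conv(l ∩ E_n²)` is an `i`-valued essential point of `f`. -/
theorem stmt18 (n : ℕ) (hn : 2 ≤ n) (f : (Fin 2 → Fin n) → Bool)
    (hf : f ∈ ThresholdClass n) (i : Bool) (a₁ a₂ a₀ : ℝ)
    (hline : ¬(a₁ = 0 ∧ a₂ = 0))
    (hsep : ∀ x, f x = i ↔ a₁ * (x 0 : ℝ) + a₂ * (x 1 : ℝ) ≤ a₀) :
    ∀ x : Fin 2 → Fin n,
      toR x ∈ Set.extremePoints ℝ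
        (convexHull ℝ (toR '' {y : Fin 2 → Fin n |
          a₁ * (y 0 : ℝ) + a₂ * (y 1 : ℝ) = a₀})) →
      Essential (ThresholdClass n) f x ∧ f x = i :=
  stmt18_general n f i a₁ a₂ a₀ hsep
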